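/- Let 0≤n≤N be integers and 0≤x≤N. Then the q-Hahn polynomial has the basic hypergeometric expression Q_n(x;α,β,N|q) = q^{−nN+n²/2} · ((q;q)_N/(q;q)_{N−n}) · ∑_{k=0}^{n} ((q^{−n};q)_k (αβq^{n+1};q)_k (q^{−x};q)_k)/((αq;q)_k (q^{−N};q)_k (q;q)_k) · q^k, where q^{−nN+n²/2} denotes the real power of q. -/

import Mathlib

open Finset

noncomputable section

/-- q-shifted factorial `(a;q)_m`. -/
def qPoch (q a : ℝ) (m : ℕ) : ℝ := ∏ k ∈ Finset.range m, (1 - a * q ^ k)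

/-- Two-variable raising operator `R_M : V_{2,M} → V_{2,M+1}` (on functions of `x = x₁`). -/
def R2 (q : ℝ) (M : ℕ) (g : ℕ → ℂ) : ℕ → ℂ := fun x =>
  (q : ℂ) ^ (-(M : ℤ) - 1) * (1 - (q : ℂ) ^ x) * g (x - 1) +
    (q : ℂ) ^ ((x : ℤ) - M - 1) * (1 - (q : ℂ) ^ ((M : ℤ) + 1 - x)) * g x

/-- `R2Iter q n k g = R_{n+k-1} ⋯ R_{n+1} R_n g`. -/
def R2Iter (q : ℝ) (n : ℕ) : ℕ → (ℕ → ℂ) → (ℕ → ℂ)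
  | 0, g => g
  | k + 1, g => R2 q (n + k) (R2Iter q n k g)

/-- The function `φ_n(x) = q^{-n²/2}(q;q)_n (abq^{n+1})^x (b⁻¹q^{-n};q)_x / (aq;q)_x`. -/
def phiH (q a b : ℝ) (n : ℕ) : ℕ → ℂ := fun x =>
  ((q ^ (-((n : ℝ) ^ 2) / 2) * qPoch q q n * (a * b * q ^ (n + 1)) ^ x *
      qPoch q (b⁻¹ * q ^ (-(n : ℤ))) x / qPoch q (a * q) x : ℝ) : ℂ)

/-- The one-dimensional q-Hahn polynomial `Q_n(x; a, b, N | q)`. -/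
def qHahnQ (q a b : ℝ) (n N : ℕ) : ℕ → ℂ := fun x =>
  ((q : ℂ) ^ ((N - n) * (N - n + 1) / 2) / ((qPoch q q (N - n) : ℝ) : ℂ)) *
    R2Iter q n (N - n) (phiH q a b n) x


/-!
By induction on `N - n`, `R_{N-1} ⋯ R_n φ_n` equals, up to an explicit power of `q` and
`(q;q)_N`, the terminating sum `₃φ₂(q^{-n}, αβq^{n+1}, q^{-x}; αq, q^{-N}; q, q)`. The inductive
step is a termwise contiguous relation in `(x, N)` for the factor `(q^{-x};q)_k / (q^{-N};q)_k`,
which is exactly the action of the raising operator. For `N = n` the factor `(q^{-n};q)_k`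
cancels and the sum becomes a `₂φ₁` evaluated by q-Chu–Vandermonde, giving `φ_n`.
-/

variable {q : ℝ}

lemma qPoch_succ (q a : ℝ) (k : ℕ) : qPoch q a (k + 1) = qPoch q a k * (1 - a * q ^ k) :=
  prod_range_succ _ _

lemma qPoch_succ' (q a : ℝ) (k : ℕ) : qPoch q a (k + 1) = (1 - a) * qPoch q (a * q) k := by
  rw [qPoch, prod_range_succ', pow_zero, mul_one, mul_comm, qPoch]
  exact congrArg _ (prod_congr rfl fun i _ => by ring)

lemma qPoch_ne_zero_iff {a : ℝ} {n : ℕ} : qPoch q a n ≠ 0 ↔ ∀ j < n, 1 - a * q ^ j ≠ 0 := by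
  simp [qPoch, prod_ne_zero_iff]

lemma qPoch_ne_zero_of_le {a : ℝ} {k n : ℕ} (h : qPoch q a n ≠ 0) (hk : k ≤ n) :
    qPoch q a k ≠ 0 := by
  rw [qPoch_ne_zero_iff] at *
  exact fun j hj => h j (by omega)

lemma qPoch_self_ne_zero (hq0 : 0 < q) (hq1 : q < 1) (k : ℕ) : qPoch q q k ≠ 0 := by
  refine qPoch_ne_zero_iff.2 fun j _ => ?_
  rw [← pow_succ', sub_ne_zero]
  exact (pow_lt_one₀ hq0.le hq1 j.succ_ne_zero).ne'

lemma qPoch_zpow_neg_ne_zero (hq0 : 0 < q) (hq1 : q < 1) {M k : ℕ} (hk : k ≤ M) :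
    qPoch q (q ^ (-(M : ℤ))) k ≠ 0 := by
  refine qPoch_ne_zero_iff.2 fun j hj => ?_
  rw [← zpow_natCast q j, ← zpow_add₀ hq0.ne', sub_ne_zero]
  exact (one_lt_zpow_of_neg₀ hq0 hq1 (by omega)).ne

lemma qPoch_zpow_neg_eq_zero (hq : q ≠ 0) {x k : ℕ} (hxk : x < k) :
    qPoch q (q ^ (-(x : ℤ))) k = 0 :=
  prod_eq_zero (mem_range.2 hxk) <| by
    rw [zpow_neg, zpow_natCast, inv_mul_cancel₀ (pow_ne_zero _ hq), sub_self]

lemma qPoch_div_succ (hq : q ≠ 0) (v : ℝ) (j : ℕ) :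
    qPoch q (v / q) (j + 1) = qPoch q v (j + 1) + v / q * (q ^ (j + 1) - 1) * qPoch q v j := by
  rw [qPoch_succ', div_mul_cancel₀ v hq, qPoch_succ]
  field_simp
  ring

def chuTerm (q C E : ℝ) (x k : ℕ) : ℝ :=
  qPoch q C k * qPoch q (q ^ (-(x : ℤ))) k / (qPoch q (C * E) k * qPoch q q k) * q ^ k

/-- `₂φ₁(q^{-x}, C; CE; q, q)`. -/
def chuSum (q C E : ℝ) (x : ℕ) : ℝ := ∑ k ∈ range (x + 1), chuTerm q C E x k

lemma chuTerm_zero (q C E : ℝ) (x : ℕ) : chuTerm q C E x 0 = 1 := by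
  simp [chuTerm, qPoch]

lemma chuTerm_succ_succ (hq0 : 0 < q) (hq1 : q < 1) (C E : ℝ) (x j : ℕ)
    (hCE : qPoch q (C * E) (j + 1) ≠ 0) :
    chuTerm q C E (x + 1) (j + 1) = chuTerm q C E x (j + 1) -
      (1 - C) / (1 - C * E) * q ^ (-(x : ℤ)) * chuTerm q (C * q) E x j := by
  have hq := hq0.ne'
  have hsplit := qPoch_succ' q (C * E) j
  have h1 : 1 - C * E ≠ 0 := left_ne_zero_of_mul (hsplit ▸ hCE)
  have h2 : qPoch q (C * E * q) j ≠ 0 := right_ne_zero_of_mul (hsplit ▸ hCE)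
  have h3 := qPoch_self_ne_zero hq0 hq1 j
  have h4 : 1 - q * q ^ j ≠ 0 := by
    have := qPoch_self_ne_zero hq0 hq1 (j + 1)
    rw [qPoch_succ] at this
    exact right_ne_zero_of_mul this
  have hx : q ^ (-((x + 1 : ℕ) : ℤ)) = q ^ (-(x : ℤ)) / q := by
    rw [Nat.cast_succ, neg_add, zpow_add₀ hq, zpow_neg_one, div_eq_mul_inv]
  simp only [chuTerm]
  rw [hx, qPoch_div_succ hq, qPoch_succ' q C, hsplit, qPoch_succ q q j,
    show C * q * E = C * E * q by ring]
  field_simp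
  ring

lemma chuSum_succ (hq0 : 0 < q) (hq1 : q < 1) (C E : ℝ) (x : ℕ)
    (hCE : qPoch q (C * E) (x + 1) ≠ 0) :
    chuSum q C E (x + 1) =
      chuSum q C E x - (1 - C) / (1 - C * E) * q ^ (-(x : ℤ)) * chuSum q (C * q) E x := by
  have hlast : chuTerm q C E x (x + 1) = 0 := by
    rw [chuTerm, qPoch_zpow_neg_eq_zero hq0.ne' (Nat.lt_succ_self x)]
    simp
  have hshift : chuSum q C E x = ∑ j ∈ range (x + 1), chuTerm q C E x (j + 1) + 1 := by
    rw [sum_range_succ, hlast, add_zero, chuSum, sum_range_succ', chuTerm_zero]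
  rw [chuSum, sum_range_succ', chuTerm_zero, hshift, chuSum, mul_sum, add_sub_right_comm,
    ← sum_sub_distrib]
  congr 1
  refine sum_congr rfl fun j hj => chuTerm_succ_succ hq0 hq1 C E x j ?_
  exact qPoch_ne_zero_of_le hCE (by simpa using hj)

theorem chuSum_eq (hq0 : 0 < q) (hq1 : q < 1) (x : ℕ) :
    ∀ C E : ℝ, qPoch q (C * E) x ≠ 0 →
      chuSum q C E x = C ^ x * qPoch q E x / qPoch q (C * E) x := by
  induction x with
  | zero => intro C E _; simp [chuSum, chuTerm_zero, qPoch]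
  | succ x ih =>
    intro C E h
    have hx : qPoch q (C * E) x ≠ 0 := qPoch_ne_zero_of_le h x.le_succ
    have hsplit := qPoch_succ' q (C * E) x
    have h1 : 1 - C * E ≠ 0 := left_ne_zero_of_mul (hsplit ▸ h)
    have hq : qPoch q (C * q * E) x ≠ 0 := by
      rw [show C * q * E = C * E * q by ring]; exact right_ne_zero_of_mul (hsplit ▸ h)
    rw [chuSum_succ hq0 hq1 C E x h, ih C E hx, ih (C * q) E hq, qPoch_succ q E x, mul_pow,
      zpow_neg, zpow_natCast]
    rw [show C * q * E = C * E * q by ring] at hq ⊢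
    have hqx : q ^ x ≠ 0 := pow_ne_zero _ hq0.ne'
    have hsucc := qPoch_succ q (C * E) x
    field_simp
    linear_combination C ^ x * qPoch q E x * (qPoch q (C * E) (x + 1) * hsucc -
      (qPoch q (C * E) (x + 1) - qPoch q (C * E) x * C * (1 - E * q ^ x)) * hsplit)

lemma one_sub_pow_mul_qPoch_mul (x : ℕ) {v : ℝ} (hv : q ^ x * v = 1) (k : ℕ) :
    (1 - q ^ x) * qPoch q (q * v) k = (q ^ k - q ^ x) * qPoch q v k := by
  induction k with
  | zero => simp [qPoch]
  | succ k ih =>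
    rw [qPoch_succ, qPoch_succ]
    linear_combination (1 - q * v * q ^ k) * ih + qPoch q v k * (q ^ (k + 1) - q ^ k) * hv

lemma one_sub_pow_mul_qPoch_zpow_neg_pred (hq : q ≠ 0) (x k : ℕ) :
    (1 - q ^ x) * qPoch q (q ^ (-((x - 1 : ℕ) : ℤ))) k =
      (q ^ k - q ^ x) * qPoch q (q ^ (-(x : ℤ))) k := by
  rcases x with _ | y
  · cases k with
    | zero => simp
    | succ k => simp [qPoch_succ']
  · have hv : q ^ (y + 1) * q ^ (-((y + 1 : ℕ) : ℤ)) = 1 := by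
      rw [zpow_neg, zpow_natCast, mul_inv_cancel₀ (pow_ne_zero _ hq)]
    have hqv : q * q ^ (-((y + 1 : ℕ) : ℤ)) = q ^ (-((y + 1 - 1 : ℕ) : ℤ)) := by
      rw [Nat.add_sub_cancel, ← zpow_one_add₀ hq]
      congr 1
      push_cast
      ring
    rw [← hqv]
    exact one_sub_pow_mul_qPoch_mul (y + 1) hv k

lemma qPoch_zpow_neg_contiguous (hq0 : 0 < q) (hq1 : q < 1) (x : ℕ) {k M : ℕ} (hkM : k ≤ M) :
    (1 - q ^ x) * qPoch q (q ^ (-((x - 1 : ℕ) : ℤ))) k / qPoch q (q ^ (-(M : ℤ))) k +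
      (q ^ x - q ^ (M + 1)) * qPoch q (q ^ (-(x : ℤ))) k / qPoch q (q ^ (-(M : ℤ))) k =
    (1 - q ^ (M + 1)) * qPoch q (q ^ (-(x : ℤ))) k / qPoch q (q ^ (-((M + 1 : ℕ) : ℤ))) k := by
  have hM := qPoch_zpow_neg_ne_zero hq0 hq1 hkM
  have hM1 := qPoch_zpow_neg_ne_zero hq0 hq1 (hkM.trans M.le_succ)
  have hx := one_sub_pow_mul_qPoch_zpow_neg_pred hq0.ne' x k
  have hM' := one_sub_pow_mul_qPoch_zpow_neg_pred hq0.ne' (M + 1) k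
  rw [Nat.add_sub_cancel] at hM'
  rw [← add_div, div_eq_div_iff hM hM1]
  linear_combination qPoch q (q ^ (-((M + 1 : ℕ) : ℤ))) k * hx -
    qPoch q (q ^ (-(x : ℤ))) k * hM'

/-- The terminating sum `₃φ₂(q^{-n}, αβq^{n+1}, q^{-x}; αq, q^{-M}; q, q)`. -/
def qHahnSum (q a b : ℝ) (n M x : ℕ) : ℝ :=
  ∑ k ∈ range (n + 1),
    qPoch q (q ^ (-(n : ℤ))) k * qPoch q (a * b * q ^ (n + 1)) k * qPoch q (q ^ (-(x : ℤ))) k /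
      (qPoch q (a * q) k * qPoch q (q ^ (-(M : ℤ))) k * qPoch q q k) * q ^ k

lemma qHahnSum_contiguous (hq0 : 0 < q) (hq1 : q < 1) (a b : ℝ) {n M : ℕ} (hnM : n ≤ M)
    (x : ℕ) :
    (1 - q ^ x) * qHahnSum q a b n M (x - 1) + (q ^ x - q ^ (M + 1)) * qHahnSum q a b n M x =
      (1 - q ^ (M + 1)) * qHahnSum q a b n (M + 1) x := by
  simp only [qHahnSum, mul_sum, ← sum_add_distrib]
  refine sum_congr rfl fun k hk => ?_
  have h := qPoch_zpow_neg_contiguous hq0 hq1 x (k := k) (M := M) (by simp at hk; omega)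
  linear_combination (qPoch q (q ^ (-(n : ℤ))) k * qPoch q (a * b * q ^ (n + 1)) k /
    (qPoch q (a * q) k * qPoch q q k) * q ^ k) * h

lemma qHahnSum_self (hq0 : 0 < q) (hq1 : q < 1) (a b : ℝ) {n x : ℕ} (hx : x ≤ n) :
    qHahnSum q a b n n x = ∑ k ∈ range (x + 1),
      qPoch q (a * b * q ^ (n + 1)) k * qPoch q (q ^ (-(x : ℤ))) k /
        (qPoch q (a * q) k * qPoch q q k) * q ^ k := by
  rw [qHahnSum, ← sum_subset (range_subset_range.2 (Nat.succ_le_succ hx)) fun k _ hk => by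
    rw [qPoch_zpow_neg_eq_zero (x := x) hq0.ne' (by simpa using hk)]
    simp]
  refine sum_congr rfl fun k hk => ?_
  have hn := qPoch_zpow_neg_ne_zero hq0 hq1 (M := n) (k := k) (by simp at hk; omega)
  calc _ = qPoch q (a * b * q ^ (n + 1)) k * qPoch q (q ^ (-(x : ℤ))) k *
          qPoch q (q ^ (-(n : ℤ))) k /
        (qPoch q (a * q) k * qPoch q q k * qPoch q (q ^ (-(n : ℤ))) k) * q ^ k := by ring
    _ = _ := by rw [mul_div_mul_right _ _ hn]

/-- `q^{-m(m+1)/2} (q;q)_m` times the right-hand side of the theorem for `N = n + m`; the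
prefactor is the inverse of the normalisation of `Q_n` in `qHahnQ`. -/
def qHahnClosedForm (q a b : ℝ) (n m x : ℕ) : ℝ :=
  q ^ (-((n : ℝ) ^ 2) / 2 - n * m - m * (m + 1) / 2) * qPoch q q (n + m) *
    qHahnSum q a b n (n + m) x

lemma qHahnClosedForm_zero (hq0 : 0 < q) (hq1 : q < 1) {a b : ℝ} (hb : b ≠ 0) {n x : ℕ}
    (hA : qPoch q (a * q) n ≠ 0) (hx : x ≤ n) :
    qHahnClosedForm q a b n 0 x = q ^ (-((n : ℝ) ^ 2) / 2) * qPoch q q n *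
      (a * b * q ^ (n + 1)) ^ x * qPoch q (b⁻¹ * q ^ (-(n : ℤ))) x / qPoch q (a * q) x := by
  have hCE : a * b * q ^ (n + 1) * (b⁻¹ * q ^ (-(n : ℤ))) = a * q := by
    rw [zpow_neg, zpow_natCast, pow_succ]
    field_simp
  have hchu := chuSum_eq hq0 hq1 x (a * b * q ^ (n + 1)) (b⁻¹ * q ^ (-(n : ℤ)))
    (hCE ▸ qPoch_ne_zero_of_le hA hx)
  simp only [chuSum, chuTerm, hCE] at hchu
  rw [qHahnClosedForm, Nat.add_zero, qHahnSum_self hq0 hq1 a b hx, hchu]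
  simp only [Nat.cast_zero, mul_zero, zero_mul, sub_zero, zero_div]
  ring

lemma qHahnClosedForm_succ (hq0 : 0 < q) (hq1 : q < 1) (a b : ℝ) (n m x : ℕ) :
    (1 - q ^ x) * qHahnClosedForm q a b n m (x - 1) +
        (q ^ x - q ^ (n + m + 1)) * qHahnClosedForm q a b n m x =
      q ^ (n + m + 1) * qHahnClosedForm q a b n (m + 1) x := by
  set c := q ^ (-((n : ℝ) ^ 2) / 2 - n * (m + 1 : ℕ) - (m + 1 : ℕ) * ((m + 1 : ℕ) + 1) / 2)
  have hexp : q ^ (-((n : ℝ) ^ 2) / 2 - n * m - m * (m + 1) / 2) = q ^ (n + m + 1) * c := by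
    rw [← Real.rpow_natCast q (n + m + 1), ← Real.rpow_add hq0]
    congr 1
    push_cast
    ring
  have hP : qPoch q q (n + m + 1) = qPoch q q (n + m) * (1 - q ^ (n + m + 1)) := by
    rw [qPoch_succ, pow_succ']
  have hs := qHahnSum_contiguous hq0 hq1 a b (Nat.le_add_right n m) x
  simp only [qHahnClosedForm, hP, hexp, ← add_assoc]
  linear_combination q ^ (n + m + 1) * c * qPoch q q (n + m) * hs

lemma R2_apply (hq : q ≠ 0) (M : ℕ) (g : ℕ → ℂ) (x : ℕ) :
    R2 q M g x = (q : ℂ) ^ (-(M : ℤ) - 1) * ((1 - (q : ℂ) ^ x) * g (x - 1) +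
      ((q : ℂ) ^ x - (q : ℂ) ^ (M + 1)) * g x) := by
  have hq' : (q : ℂ) ≠ 0 := Complex.ofReal_ne_zero.2 hq
  have h1 : (q : ℂ) ^ ((x : ℤ) - M - 1) = (q : ℂ) ^ (-(M : ℤ) - 1) * (q : ℂ) ^ x := by
    rw [← zpow_natCast, ← zpow_add₀ hq']
    ring_nf
  have h2 : (q : ℂ) ^ ((x : ℤ) - M - 1) * (q : ℂ) ^ ((M : ℤ) + 1 - x) = 1 := by
    rw [← zpow_add₀ hq']
    ring_nf
    exact zpow_zero _
  have h3 : (q : ℂ) ^ (-(M : ℤ) - 1) * (q : ℂ) ^ (M + 1) = 1 := by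
    rw [← zpow_natCast, ← zpow_add₀ hq']
    push_cast
    ring_nf
    exact zpow_zero _
  rw [R2]
  linear_combination g x * (h1 - h2 + h3)

lemma R2_congr (hq : q ≠ 0) {M : ℕ} {g g' : ℕ → ℂ} (h : ∀ y ≤ M, g y = g' y) {x : ℕ}
    (hx : x ≤ M + 1) : R2 q M g x = R2 q M g' x := by
  rw [R2_apply hq, R2_apply hq, h (x - 1) (by omega)]
  rcases hx.lt_or_eq with hx | rfl
  · rw [h x (by omega)]
  · simp

lemma R2Iter_phiH_eq (hq0 : 0 < q) (hq1 : q < 1) {a b : ℝ} (hb : b ≠ 0) {n : ℕ}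
    (hA : qPoch q (a * q) n ≠ 0) (m : ℕ) :
    ∀ x ≤ n + m, R2Iter q n m (phiH q a b n) x = (qHahnClosedForm q a b n m x : ℂ) := by
  induction m with
  | zero =>
    intro x hx
    rw [R2Iter, phiH, qHahnClosedForm_zero hq0 hq1 hb hA hx]
  | succ m ih =>
    intro x hx
    have hq : (q : ℂ) ≠ 0 := Complex.ofReal_ne_zero.2 hq0.ne'
    have hstep := congrArg (fun r : ℝ => (r : ℂ)) (qHahnClosedForm_succ hq0 hq1 a b n m x)
    push_cast at hstep
    rw [R2Iter, R2_congr hq0.ne' ih hx, R2_apply hq0.ne', hstep, ← mul_assoc, ← zpow_natCast,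
      ← zpow_add₀ hq, show -((n + m : ℕ) : ℤ) - 1 + ((n + m + 1 : ℕ) : ℤ) = 0 by omega,
      zpow_zero, one_mul]

lemma qPoch_mul_ne_zero_of_lt_inv (hq0 : 0 < q) (hq1 : q < 1) {a : ℝ} (ha : a < q⁻¹) (n : ℕ) :
    qPoch q (a * q) n ≠ 0 := by
  refine qPoch_ne_zero_iff.2 fun j _ => ?_
  have haq : a * q < 1 := by simpa [hq0.ne'] using mul_lt_mul_of_pos_right ha hq0
  have hj0 : 0 < q ^ j := pow_pos hq0 j
  have hj1 : q ^ j ≤ 1 := pow_le_one₀ hq0.le hq1.le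
  nlinarith [mul_pos hj0 (sub_pos.2 haq)]

lemma qPoch_mul_ne_zero_of_zpow_lt (hq0 : 0 < q) (hq1 : q < 1) {a : ℝ} {n N : ℕ} (hn : n ≤ N)
    (ha : q ^ (-(N : ℤ)) < a) : qPoch q (a * q) n ≠ 0 := by
  refine qPoch_ne_zero_iff.2 fun j hj => ?_
  have h1 : 1 ≤ q ^ (-(N : ℤ)) * q ^ (j + 1) := by
    rw [← zpow_natCast, ← zpow_add₀ hq0.ne']
    exact one_le_zpow_of_nonpos₀ hq0 hq1.le (by push_cast; omega)
  have h2 := mul_lt_mul_of_pos_right ha (pow_pos hq0 (j + 1))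
  rw [mul_assoc, ← pow_succ']
  linarith

theorem stmt12_general (q : ℝ) (hq0 : 0 < q) (hq1 : q < 1) (a b : ℝ) (hb : 0 < b)
    (n N x : ℕ) (hnN : n ≤ N) (hx : x ≤ N)
    (hparam : (a < q⁻¹ ∧ b < q⁻¹) ∨ ((q : ℝ) ^ (-(N : ℤ)) < a ∧ (q : ℝ) ^ (-(N : ℤ)) < b)) :
    qHahnQ q a b n N x =
      ((q ^ ((n : ℝ) ^ 2 / 2 - (n : ℝ) * N) : ℝ) : ℂ) *
        ((qPoch q q N / qPoch q q (N - n) : ℝ) : ℂ) *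
        ∑ k ∈ Finset.range (n + 1),
          ((qPoch q (q ^ (-(n : ℤ))) k * qPoch q (a * b * q ^ (n + 1)) k *
              qPoch q (q ^ (-(x : ℤ))) k /
              (qPoch q (a * q) k * qPoch q (q ^ (-(N : ℤ))) k * qPoch q q k) : ℝ) : ℂ) *
          (q : ℂ) ^ k := by
  obtain ⟨m, rfl⟩ := Nat.exists_eq_add_of_le hnN
  have hA : qPoch q (a * q) n ≠ 0 := by
    rcases hparam with ⟨ha, -⟩ | ⟨ha, -⟩
    · exact qPoch_mul_ne_zero_of_lt_inv hq0 hq1 ha n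
    · exact qPoch_mul_ne_zero_of_zpow_lt hq0 hq1 hnN ha
  have hexp : q ^ (m * (m + 1) / 2) * q ^ (-((n : ℝ) ^ 2) / 2 - n * m - m * (m + 1) / 2) =
      q ^ ((n : ℝ) ^ 2 / 2 - n * (n + m : ℕ)) := by
    rw [← Real.rpow_natCast q (m * (m + 1) / 2), ← Real.rpow_add hq0,
      Nat.cast_div (Nat.even_mul_succ_self m).two_dvd two_ne_zero]
    push_cast
    ring_nf
  have hexpC := congrArg (fun r : ℝ => (r : ℂ)) hexp
  push_cast at hexpC
  rw [qHahnQ, Nat.add_sub_cancel_left, R2Iter_phiH_eq hq0 hq1 hb.ne' hA m x hx, qHahnClosedForm,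
    qHahnSum]
  push_cast
  linear_combination (qPoch q q (n + m) : ℂ) / (qPoch q q m : ℂ) * (∑ k ∈ range (n + 1), _) * hexpC

theorem stmt12 (q : ℝ) (hq0 : 0 < q) (hq1 : q < 1) (a b : ℝ) (ha : 0 < a) (hb : 0 < b)
    (n N x : ℕ) (hnN : n ≤ N) (hx : x ≤ N)
    (hparam : (a < q⁻¹ ∧ b < q⁻¹) ∨ ((q : ℝ) ^ (-(N : ℤ)) < a ∧ (q : ℝ) ^ (-(N : ℤ)) < b)) :
    qHahnQ q a b n N x =
      ((q ^ ((n : ℝ) ^ 2 / 2 - (n : ℝ) * N) : ℝ) : ℂ) *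
        ((qPoch q q N / qPoch q q (N - n) : ℝ) : ℂ) *
        ∑ k ∈ Finset.range (n + 1),
          ((qPoch q (q ^ (-(n : ℤ))) k * qPoch q (a * b * q ^ (n + 1)) k *
              qPoch q (q ^ (-(x : ℤ))) k /
              (qPoch q (a * q) k * qPoch q (q ^ (-(N : ℤ))) k * qPoch q q k) : ℝ) : ℂ) *
          (q : ℂ) ^ k :=
  stmt12_general q hq0 hq1 a b hb n N x hnN hx hparam
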